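/- Suppose n > 1 and f^ω(0) contains a factor X₁YX₂ with X₁ ∼ X₂ and |X₁| ≥ 24n. Then f^ω(0) contains a factor x̂₁ŷx̂₂ with x̂₁ ∼ x̂₂, |X₁Y| ≥ (13n/(n+1))·|x̂₁ŷ|, and |X₁YX₂|/|X₁Y| ≤ |x̂₁ŷx̂₂|/|x̂₁ŷ| + 72/|X₁Y|. -/

import Mathlib

/-- The image of 0 under the morphism: 0740103050260. -/
def f0 : List (Fin 8) := [0,7,4,0,1,0,3,0,5,0,2,6,0]

/-- The cyclic shift morphism σ, sending each letter a to a+1 (mod 8). -/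
def sigmaW (w : List (Fin 8)) : List (Fin 8) := w.map (· + 1)

/-- The image of a letter under the cyclic morphism f: f(a) = σ^a(f(0)). -/
def fL (a : Fin 8) : List (Fin 8) := f0.map (· + a)

/-- The morphism f extended to words. -/
def fW (w : List (Fin 8)) : List (Fin 8) := w.flatMap fL

/-- f^n(0). -/
def fIter (n : ℕ) : List (Fin 8) := fW^[n] [0]

/-- u is a factor of the fixed point f^ω(0): since f^n(0) is a prefix of
f^{n+1}(0), this holds iff u is a factor of some f^n(0). -/
def FactorFP (u : List (Fin 8)) : Prop := ∃ n, u <:+: fIter n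

/-- A letter of Σ ∪ {ε} viewed as a word. -/
def optL (a : Option (Fin 8)) : List (Fin 8) := a.elim [] (fun x => [x])

/-- The image under f of an element of Σ ∪ {ε}. -/
def imgF (a : Option (Fin 8)) : List (Fin 8) := a.elim [] fL

/-! Every factor of `f(w)` of length at least 12 parses as `s f(x) p`, where `s` is a proper suffix
and `p` a proper prefix of the images of the letters on either side of `x`; such a piece contains
each letter at most once, except the letter of its own block, at most five times. As
`|f(x)|_a = |x| + 5 |x|_a`, comparing letter counts in `s₁ f(x₁) p₁ ∼ s₂ f(x₂) p₂` shows that `x₁`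
and `x₂` differ at most by the letters of the blocks cut by the other pair of pieces, so adding
those letters makes them Abelian equivalent. The length estimates come from `|s_i|, |p_i| ≤ 12`. -/

lemma length_fL (c : Fin 8) : (fL c).length = 13 := by
  revert c; decide

lemma count_fL (c a : Fin 8) : (fL c).count a = 1 + 5 * [c].count a := by
  revert c a; decide

lemma count_tail_fL (c a : Fin 8) : (fL c).tail.count a = 1 + 4 * [c].count a := by
  revert c a; decide

lemma count_dropLast_fL (c a : Fin 8) : (fL c).dropLast.count a = 1 + 4 * [c].count a := by
  revert c a; decide

@[simp] lemma fW_nil : fW [] = [] := rfl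

@[simp] lemma fW_cons (c : Fin 8) (w : List (Fin 8)) : fW (c :: w) = fL c ++ fW w := rfl

@[simp] lemma fW_append (v w : List (Fin 8)) : fW (v ++ w) = fW v ++ fW w :=
  List.flatMap_append

@[simp] lemma length_fW (w : List (Fin 8)) : (fW w).length = 13 * w.length := by
  induction w with
  | nil => rfl
  | cons c w ih => simp only [fW_cons, List.length_append, length_fL, ih, List.length_cons]; ring

lemma count_fW (a : Fin 8) (w : List (Fin 8)) :
    (fW w).count a = w.length + 5 * w.count a := by
  induction w with
  | nil => rfl
  | cons c w ih =>
    simp only [fW_cons, List.count_append, ih, count_fL, List.count_cons, List.length_cons,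
      List.count_nil]
    split_ifs <;> omega

lemma fIter_succ (K : ℕ) : fIter (K + 1) = fW (fIter K) :=
  Function.iterate_succ_apply' fW K [0]

/-- A cut of `f(w)` falls either between two blocks (`m = []`, `s = []`) or strictly inside the
block `f(c)` of a letter `m = [c]`, of which it leaves the nonempty proper suffix `s`. -/
structure IsCutSuffix (m s : List (Fin 8)) : Prop where
  length_le_one : m.length ≤ 1
  isSuffix : s <:+ fW m
  length_le : m.length ≤ s.length
  length_le_twelve : s.length ≤ 12

structure IsCutPrefix (m p : List (Fin 8)) : Prop where
  length_le_one : m.length ≤ 1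
  isPrefix : p <+: fW m
  length_le : m.length ≤ p.length
  length_le_twelve : p.length ≤ 12

lemma IsCutSuffix.count_le {m s : List (Fin 8)} (h : IsCutSuffix m s) (a : Fin 8) :
    s.count a ≤ m.length + 4 * m.count a := by
  rcases m with _ | ⟨c, _ | ⟨d, m⟩⟩
  · simp [List.suffix_nil.mp h.isSuffix]
  · have hs : s <:+ (fL c).tail :=
      List.suffix_of_suffix_length_le (by simpa using h.isSuffix) (List.tail_suffix _)
        (by simpa [length_fL] using h.length_le_twelve)
    simpa [count_tail_fL] using hs.sublist.count_le a
  · simpa using h.length_le_one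

lemma IsCutPrefix.count_le {m p : List (Fin 8)} (h : IsCutPrefix m p) (a : Fin 8) :
    p.count a ≤ m.length + 4 * m.count a := by
  rcases m with _ | ⟨c, _ | ⟨d, m⟩⟩
  · simp [List.prefix_nil.mp h.isPrefix]
  · have hp : p <+: (fL c).dropLast :=
      List.prefix_of_prefix_length_le (by simpa using h.isPrefix) (List.dropLast_prefix _)
        (by simpa [length_fL] using h.length_le_twelve)
    simpa [count_dropLast_fL] using hp.sublist.count_le a
  · simpa using h.length_le_one

lemma exists_cut_of_fW_eq_append {w P R : List (Fin 8)} (h : fW w = P ++ R) :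
    ∃ w₁ m w₂ u v, w = w₁ ++ m ++ w₂ ∧ fW m = u ++ v ∧ P = fW w₁ ++ u ∧ R = v ++ fW w₂ ∧
      m.length ≤ 1 ∧ u.length ≤ 12 ∧ v.length ≤ 12 := by
  induction w generalizing P with
  | nil =>
    obtain ⟨rfl, rfl⟩ := List.append_eq_nil_iff.mp h.symm
    exact ⟨[], [], [], [], [], by simp⟩
  | cons c w ih =>
    rw [fW_cons] at h
    rcases List.append_eq_append_iff.mp h with ⟨P', rfl, hw⟩ | ⟨v, hc, rfl⟩
    · obtain ⟨w₁, m, w₂, u, v, rfl, hm, rfl, rfl, hlm, hu, hv⟩ := ih hw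
      exact ⟨c :: w₁, m, w₂, u, v, by simp, hm, by simp, rfl, hlm, hu, hv⟩
    · have hlen : P.length + v.length = 13 := by
        simpa [length_fL] using (congrArg List.length hc).symm
      by_cases hP : P = []
      · subst hP
        exact ⟨[], [], c :: w, [], [], by simp, by simp, by simp, by simpa using hc.symm, by simp⟩
      by_cases hv : v = []
      · subst hv
        exact ⟨[c], [], w, [], [], by simp, by simp, by simpa using hc.symm, by simp, by simp⟩
      have hP₀ := List.length_pos_iff.mpr hP
      have hv₀ := List.length_pos_iff.mpr hv
      exact ⟨[], [c], w, P, v, by simp, by simpa using hc, by simp, rfl, by simp, by omega,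
        by omega⟩

lemma exists_eq_append_of_append_eq_append {α : Type*} {A B s R : List α}
    (h : A ++ B = s ++ R) (hs : s.length ≤ A.length) : ∃ A', A = s ++ A' ∧ R = A' ++ B := by
  rcases List.append_eq_append_iff.mp h with ⟨A', rfl, rfl⟩ | ⟨A', rfl, rfl⟩
  · obtain rfl : A' = [] :=
      List.eq_nil_of_length_eq_zero (by simp only [List.length_append] at hs; omega)
    exact ⟨[], by simp, by simp⟩
  · exact ⟨A', rfl, rfl⟩

lemma exists_parsing_of_fW_eq {w P X R : List (Fin 8)} (h : fW w = P ++ X ++ R)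
    (hX : 12 ≤ X.length) :
    ∃ w₀ m x m' w₁ s p, w = w₀ ++ m ++ x ++ m' ++ w₁ ∧ X = s ++ fW x ++ p ∧
      fW (w₀ ++ m) = P ++ s ∧ fW (m' ++ w₁) = p ++ R ∧ IsCutSuffix m s ∧ IsCutPrefix m' p := by
  obtain ⟨w₀, m, w', u, s, rfl, hm, rfl, hXR, hlm, hu, hs⟩ :=
    exists_cut_of_fW_eq_append (h.trans (List.append_assoc _ _ _))
  obtain ⟨X', rfl, hX'⟩ := exists_eq_append_of_append_eq_append hXR (by omega)
  obtain ⟨x, m', w₁, p, v, rfl, hm', rfl, rfl, hlm', hp, hv⟩ :=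
    exists_cut_of_fW_eq_append hX'
  have hlen := congrArg List.length hm
  have hlen' := congrArg List.length hm'
  simp only [length_fW, List.length_append] at hlen hlen'
  refine ⟨w₀, m, x, m', w₁, s, p, by simp, by simp, by simp [hm], by simp [hm'],
    ⟨hlm, ⟨u, hm.symm⟩, by omega, hs⟩, ⟨hlm', ⟨v, hm'.symm⟩, by omega, hp⟩⟩

section Decomposition

variable {α : Type*} [DecidableEq α]

lemma exists_count_eq_of_length_le_one {m : List α} (hm : m.length ≤ 1) {k : α → ℕ}
    (hk : ∀ a, k a ≤ m.count a) : ∃ e, (e = [] ∨ e = m) ∧ ∀ a, e.count a = k a := by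
  rcases m with _ | ⟨c, _ | ⟨d, m⟩⟩
  · exact ⟨[], Or.inl rfl, fun a => by simpa using (Nat.le_zero.mp (by simpa using hk a)).symm⟩
  · have hc : k c ≤ 1 := by simpa using hk c
    refine ⟨List.replicate (k c) c, ?_, fun a => ?_⟩
    · interval_cases h : k c <;> simp
    · rw [List.count_replicate]
      by_cases hca : c = a
      · simp [hca]
      · simpa [hca] using (Nat.le_zero.mp (by simpa [hca] using hk a)).symm
  · simp at hm

lemma exists_count_append_eq {m m' : List α} (hm : m.length ≤ 1) (hm' : m'.length ≤ 1)
    {h : α → ℕ} (hh : ∀ a, h a ≤ (m ++ m').count a) :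
    ∃ e f, (e = [] ∨ e = m) ∧ (f = [] ∨ f = m') ∧ ∀ a, h a = (e ++ f).count a := by
  obtain ⟨e, he, hce⟩ := exists_count_eq_of_length_le_one hm (k := fun a => min (h a) (m.count a))
    (fun a => min_le_right _ _)
  obtain ⟨f, hf, hcf⟩ := exists_count_eq_of_length_le_one hm' (k := fun a => h a - m.count a)
    (fun a => by have := hh a; rw [List.count_append] at this; omega)
  exact ⟨e, f, he, hf, fun a => by rw [List.count_append, hce, hcf]; omega⟩

end Decomposition

lemma exists_eq_append_append_of_isPrefix_of_isSuffix {α : Type*} {f e m m' μ : List α}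
    (hf : f = [] ∨ f = m) (he : e = [] ∨ e = m') (hm : m <+: μ) (hm' : m' <:+ μ)
    (hlm : m.length ≤ 1) (hlm' : m'.length ≤ 1) (hdisj : m = m' → f = [] ∨ e = []) :
    ∃ y, μ = f ++ y ++ e := by
  have hfμ : f <+: μ := by rcases hf with rfl | rfl; exacts [List.nil_prefix, hm]
  have heμ : e <:+ μ := by rcases he with rfl | rfl; exacts [List.nil_suffix, hm']
  by_cases hlen : f.length + e.length ≤ μ.length
  · obtain ⟨t, rfl⟩ := hfμ
    obtain ⟨y, rfl⟩ := List.suffix_of_suffix_length_le heμ (List.suffix_append f t)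
      (by simp only [List.length_append] at hlen; omega)
    exact ⟨y, by simp⟩
  · exfalso
    have hf₁ := hfμ.length_le
    have he₁ := heμ.length_le
    rcases hf with rfl | rfl
    · rw [List.length_nil] at hlen; omega
    rcases he with rfl | rfl
    · rw [List.length_nil] at hlen; omega
    have hmμ := hm.eq_of_length (by omega)
    have hm'μ := hm'.eq_of_length (by omega)
    rcases hdisj (hmμ.trans hm'μ.symm) with rfl | rfl <;> simp at hlen <;> omega

lemma count_sub_count_le_of_perm {m₁ s₁ x₁ p₁ m₂ m₃ s₂ x₂ p₂ m₄ : List (Fin 8)}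
    (hs₁ : IsCutSuffix m₁ s₁) (hp₁ : IsCutPrefix m₂ p₁)
    (hs₂ : IsCutSuffix m₃ s₂) (hp₂ : IsCutPrefix m₄ p₂)
    (h : (s₁ ++ fW x₁ ++ p₁).Perm (s₂ ++ fW x₂ ++ p₂)) (a : Fin 8) :
    x₁.count a - x₂.count a ≤ (m₃ ++ m₄).count a := by
  have hcount := h.count_eq a
  have hlen := h.length_eq
  simp only [List.count_append, count_fW, List.length_append, length_fW] at hcount hlen ⊢
  -- `13 (|x₂| - |x₁|) = |s₁ p₁| - |s₂ p₂|` forces `|x₂| ≤ |x₁| + 1`, hence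
  -- `5 (|x₁|_a - |x₂|_a) ≤ |s₂ p₂|_a + 1`, which the piece bounds cap by `5 |m₃ m₄|_a + 4`.
  have := hs₂.count_le a; have := hp₂.count_le a
  have := List.count_le_length (a := a) (l := m₃); have := List.count_le_length (a := a) (l := m₄)
  have := hs₁.length_le_twelve; have := hp₁.length_le_twelve
  have := hs₂.length_le_twelve; have := hp₂.length_le_twelve
  have := hs₂.length_le_one; have := hp₂.length_le_one
  omega

lemma exists_perm_of_perm_fW {m₁ s₁ x₁ p₁ m₂ m₃ s₂ x₂ p₂ m₄ : List (Fin 8)}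
    (hs₁ : IsCutSuffix m₁ s₁) (hp₁ : IsCutPrefix m₂ p₁)
    (hs₂ : IsCutSuffix m₃ s₂) (hp₂ : IsCutPrefix m₄ p₂)
    (h : (s₁ ++ fW x₁ ++ p₁).Perm (s₂ ++ fW x₂ ++ p₂)) :
    ∃ e₁ f₁ e₂ f₂, (e₁ = [] ∨ e₁ = m₁) ∧ (f₁ = [] ∨ f₁ = m₂) ∧ (e₂ = [] ∨ e₂ = m₃) ∧
      (f₂ = [] ∨ f₂ = m₄) ∧ (m₂ = m₃ → f₁ = [] ∨ e₂ = []) ∧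
      (e₁ ++ x₁ ++ f₁).Perm (e₂ ++ x₂ ++ f₂) := by
  obtain ⟨e₁, f₁, he₁, hf₁, hc₁⟩ := exists_count_append_eq hs₁.length_le_one hp₁.length_le_one
    (count_sub_count_le_of_perm hs₂ hp₂ hs₁ hp₁ h.symm)
  obtain ⟨e₂, f₂, he₂, hf₂, hc₂⟩ := exists_count_append_eq hs₂.length_le_one hp₂.length_le_one
    (count_sub_count_le_of_perm hs₁ hp₁ hs₂ hp₂ h)
  refine ⟨e₁, f₁, e₂, f₂, he₁, hf₁, he₂, hf₂, ?_, ?_⟩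
  · -- A letter `d` added on both sides would make `|x₂|_d - |x₁|_d` and `|x₁|_d - |x₂|_d` positive.
    rintro rfl
    by_contra! hne
    obtain rfl := hf₁.resolve_left hne.1
    obtain ⟨d, hd⟩ := List.exists_mem_of_ne_nil _ hne.1
    have h₁ := hc₁ d
    have h₂ := hc₂ d
    have hd₁ : 0 < (e₁ ++ f₁).count d := List.count_pos_iff.mpr (List.mem_append_right _ hd)
    have hd₂ : 0 < (e₂ ++ f₂).count d := by
      rw [he₂.resolve_left hne.2]
      exact List.count_pos_iff.mpr (List.mem_append_left _ hd)
    omega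
  · refine List.perm_iff_count.mpr fun a => ?_
    have h₁ := hc₁ a
    have h₂ := hc₂ a
    simp only [List.count_append] at h₁ h₂ ⊢
    omega

theorem exists_perm_factor_of_fW_eq {w P X₁ Y X₂ Q : List (Fin 8)}
    (hw : fW w = P ++ X₁ ++ Y ++ X₂ ++ Q) (hperm : X₁.Perm X₂) (hX₁ : 12 ≤ X₁.length) :
    ∃ x y z, x ++ y ++ z <:+: w ∧ x.Perm z ∧
      13 * (x ++ y).length ≤ (X₁ ++ Y).length + 24 ∧
      (X₁ ++ Y).length ≤ 13 * (x ++ y).length + 24 ∧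
      X₂.length ≤ 13 * z.length + 24 := by
  obtain ⟨w₀, m₁, x₁, m₂, w₁, s₁, p₁, rfl, rfl, -, hw₁, hs₁, hp₁⟩ :=
    exists_parsing_of_fW_eq (R := Y ++ X₂ ++ Q) (by simpa only [List.append_assoc] using hw) hX₁
  obtain ⟨μ₀, m₃, x₂, m₄, w₂, s₂, p₂, hμ, rfl, hfμ, -, hs₂, hp₂⟩ :=
    exists_parsing_of_fW_eq (P := p₁ ++ Y) (by simpa only [List.append_assoc] using hw₁)
      (hperm.length_eq ▸ hX₁)
  obtain ⟨e₁, f₁, e₂, f₂, he₁, hf₁, he₂, hf₂, hdisj, hperm'⟩ :=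
    exists_perm_of_perm_fW hs₁ hp₁ hs₂ hp₂ hperm
  have hlμ := congrArg List.length hfμ
  simp only [length_fW, List.length_append] at hlμ
  have hm₂ : m₂ <+: μ₀ ++ m₃ := by
    refine List.prefix_of_prefix_length_le (List.prefix_append m₂ w₁) ?_ ?_
    · rw [hμ, List.append_assoc, List.append_assoc]
      exact List.prefix_append _ _
    · have := hp₁.length_le; have := hp₁.length_le_one
      simp only [List.length_append]; omega
  obtain ⟨y, hy⟩ := exists_eq_append_append_of_isPrefix_of_isSuffix hf₁ he₂ hm₂
    (List.suffix_append μ₀ m₃) hp₁.length_le_one hs₂.length_le_one hdisj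
  obtain ⟨α, hα⟩ : ∃ α, m₁ = α ++ e₁ := by
    rcases he₁ with rfl | rfl; exacts [⟨m₁, by simp⟩, ⟨[], by simp⟩]
  obtain ⟨β, hβ⟩ : ∃ β, m₄ = f₂ ++ β := by
    rcases hf₂ with rfl | rfl; exacts [⟨m₄, by simp⟩, ⟨[], by simp⟩]
  refine ⟨e₁ ++ x₁ ++ f₁, y, e₂ ++ x₂ ++ f₂, ⟨w₀ ++ α, β ++ w₂, ?_⟩, hperm', ?_⟩
  · rw [List.append_assoc _ m₂, hμ, hy, hα, hβ]
    simp only [List.append_assoc]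
  · have hly := congrArg List.length hy
    have hle₁ := congrArg List.length hα
    simp only [List.length_append, length_fW] at hly hle₁ ⊢
    have := hs₁.length_le; have := hs₁.length_le_twelve; have := hs₁.length_le_one
    have := hs₂.length_le; have := hs₂.length_le_twelve; have := hs₂.length_le_one
    have := hp₁.length_le_twelve
    have := hp₂.length_le_twelve
    have : e₂.length ≤ m₃.length := by rcases he₂ with rfl | rfl <;> simp
    omega

lemma ratio_bounds {n L M S Z : ℝ} (hn : 1 < n) (hM : 24 * n ≤ M) (hML : M ≤ L)
    (hS : 13 * S ≤ L + 24) (hS' : L ≤ 13 * S + 24) (hZ : M ≤ 13 * Z + 24) :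
    13 * n / (n + 1) * S ≤ L ∧ (L + M) / L ≤ (S + Z) / S + 72 / L := by
  have hL : 0 < L := by linarith
  have hSpos : 0 < S := by linarith
  constructor
  · rw [div_mul_eq_mul_div, div_le_iff₀ (by linarith)]
    nlinarith
  · rw [div_add_div _ _ hSpos.ne' hL.ne', div_le_div_iff₀ hL (by positivity)]
    have key : M * S ≤ L * Z + 72 * S := by nlinarith
    nlinarith

theorem stmt9 (n : ℝ) (hn : 1 < n)
    (X₁ Y X₂ : List (Fin 8))
    (hfac : FactorFP (X₁ ++ Y ++ X₂))
    (hperm : X₁.Perm X₂)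
    (hlen : 24 * n ≤ (X₁.length : ℝ)) :
    ∃ x y z : List (Fin 8),
      FactorFP (x ++ y ++ z) ∧ x.Perm z ∧
      (13 * n / (n + 1)) * ((x ++ y).length : ℝ) ≤ ((X₁ ++ Y).length : ℝ) ∧
      ((X₁ ++ Y ++ X₂).length : ℝ) / ((X₁ ++ Y).length : ℝ) ≤
        ((x ++ y ++ z).length : ℝ) / ((x ++ y).length : ℝ)
          + 72 / ((X₁ ++ Y).length : ℝ) := by
  have hX₁ : 24 < X₁.length := by exact_mod_cast (by linarith : (24 : ℝ) < X₁.length)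
  obtain ⟨_ | K, P, Q, hK⟩ := hfac
  · have := congrArg List.length hK
    simp only [fIter, Function.iterate_zero, id_eq, List.length_append, List.length_singleton]
      at this
    omega
  rw [fIter_succ] at hK
  obtain ⟨x, y, z, hxyz, hxz, h₁, h₂, h₃⟩ :=
    exists_perm_factor_of_fW_eq (by simpa only [List.append_assoc] using hK.symm) hperm (by omega)
  have hX₂ := hperm.length_eq
  obtain ⟨hr₁, hr₂⟩ := ratio_bounds (L := ((X₁ ++ Y).length : ℝ)) (M := (X₂.length : ℝ))
    (S := ((x ++ y).length : ℝ)) (Z := (z.length : ℝ)) hn (by rwa [← hX₂])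
    (by simp [hX₂]) (by exact_mod_cast h₁) (by exact_mod_cast h₂) (by exact_mod_cast h₃)
  refine ⟨x, y, z, ⟨K, hxyz⟩, hxz, hr₁, ?_⟩
  simpa only [List.length_append, Nat.cast_add] using hr₂
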